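/- Let U, V, W be Hilbert A-modules and σ : U → V, σ' : V → W adjointable maps such that the sequence U →^{σ} V →^{σ'} W is exact (Rng σ = Ker σ') and the image of σ' is closed in W. Then for all nonzero complex scalars λ, μ ∈ ℂ \ {0}, the map λ · σ ∘ σ* + μ · σ'* ∘ σ' : V → V is bijective, i.e. a continuous A-linear automorphism of V. -/

import Mathlib

/-- A pre-Hilbert module over a unital C*-algebra `A`: a left `A`-module equipped with an
`A`-valued inner product (`A`-linear in the first argument, conjugate-symmetric, positive
definite), whose norm is the one induced by the inner product. -/
class PreHilbertModule (A : Type*) (U : Type*) [CStarAlgebra A] [PartialOrder A]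
    [StarOrderedRing A] [NormedAddCommGroup U] [Module A U] extends Inner A U where
  inner_add_left (x y z : U) : inner (x + y) z = inner x z + inner y z
  inner_smul_left (a : A) (x y : U) : inner (a • x) y = a * inner x y
  star_inner (x y : U) : star (inner x y) = inner y x
  inner_self_nonneg (x : U) : 0 ≤ inner x x
  inner_self_eq_zero (x : U) : inner x x = 0 ↔ x = 0
  norm_eq (x : U) : ‖x‖ = Real.sqrt ‖inner x x‖

/-!
The Laplacian `Δ = σσ* + σ'*σ'` is positive, `⟪Δv, v⟫ = ⟪σ*v, σ*v⟫ + ⟪σ'v, σ'v⟫`, and bounded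
below: write `v = x + p` with `σ'x = σ'v`, `‖x‖ ≲ ‖σ'v‖` and `p ∈ ker σ' = range σ`; the open
mapping theorem on the closed ranges of `σ'` and `σ` gives `‖v‖ ≲ ‖σ*v‖ + ‖σ'v‖`, and both terms
are at most `(‖Δv‖ ‖v‖)^(1/2)`. A positive operator that is bounded below is invertible, by the
method of continuity along `Δ + s`, `s ≥ 0`. Finally `σσ*` and `σ'*σ'` annihilate each other
since `σ'σ = 0`, so `λσσ* + μσ'*σ'` and `λ⁻¹σσ* + μ⁻¹σ'*σ'` multiply to `Δ²` in either order.
-/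

theorem isUnit_smul_add_smul_of_mul_eq_zero {𝕜 R : Type*} [Field 𝕜] [Ring R] [Algebra 𝕜 R]
    {a b : R} (hab : a * b = 0) (hba : b * a = 0) (h : IsUnit (a + b)) {l m : 𝕜} (hl : l ≠ 0)
    (hm : m ≠ 0) : IsUnit (l • a + m • b) := by
  have hsq : (a + b) * (a + b) = a * a + b * b := by simp [add_mul, mul_add, hab, hba]
  have h₁ : (l • a + m • b) * (l⁻¹ • a + m⁻¹ • b) = (a + b) * (a + b) := by
    simp [hsq, add_mul, mul_add, hab, hba, hl, hm]
  have h₂ : (l⁻¹ • a + m⁻¹ • b) * (l • a + m • b) = (a + b) * (a + b) := by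
    simp [hsq, add_mul, mul_add, hab, hba, hl, hm]
  have hcomm : Commute (l • a + m • b) (l⁻¹ • a + m⁻¹ • b) := h₁.trans h₂.symm
  exact (hcomm.isUnit_mul_iff.1 (h₁ ▸ h.mul h)).1

namespace ContinuousLinearMap

section NontriviallyNormedField

variable {𝕜 E : Type*} [NontriviallyNormedField 𝕜] [NormedAddCommGroup E] [NormedSpace 𝕜 E]
  [CompleteSpace E]

theorem exists_preimage_norm_le_of_isClosed_range {F : Type*} [NormedAddCommGroup F]
    [NormedSpace 𝕜 F] [CompleteSpace F] (f : E →L[𝕜] F) (hf : IsClosed (Set.range f)) :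
    ∃ C > 0, ∀ y ∈ Set.range f, ∃ x, f x = y ∧ ‖x‖ ≤ C * ‖y‖ := by
  have : CompleteSpace f.range := hf.completeSpace_coe
  obtain ⟨C, hC, hpre⟩ :=
    f.rangeRestrict.exists_preimage_norm_le fun ⟨_, x, hx⟩ => ⟨x, Subtype.ext hx⟩
  refine ⟨C, hC, ?_⟩
  rintro _ ⟨x, rfl⟩
  obtain ⟨x', hx', hle⟩ := hpre ⟨f x, x, rfl⟩
  exact ⟨x', congrArg Subtype.val hx', hle⟩

theorem isUnit_of_norm_sub_lt {c : ℝ} (hc : 0 < c) (u : (E →L[𝕜] E)ˣ)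
    (hu : ∀ v, c * ‖v‖ ≤ ‖(u : E →L[𝕜] E) v‖) {T : E →L[𝕜] E} (hT : ‖T - u‖ < c) : IsUnit T := by
  nontriviality E
  have hinv : ‖(↑u⁻¹ : E →L[𝕜] E)‖ ≤ c⁻¹ := by
    refine opNorm_le_bound _ (inv_nonneg.2 hc.le) fun w => ?_
    rw [inv_mul_eq_div, le_div_iff₀' hc]
    have := hu ((↑u⁻¹ : E →L[𝕜] E) w)
    rwa [← mul_apply_eq_comp, u.mul_inv, one_apply_eq_self] at this
  have hpos : 0 < ‖(↑u⁻¹ : E →L[𝕜] E)‖ := Units.norm_pos u⁻¹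
  exact (u.ofNearby T (hT.trans_le ((le_inv_comm₀ hc hpos).2 hinv))).isUnit

end NontriviallyNormedField

-- Method of continuity: `T + s` is invertible for `s > ‖T‖` and bounded below by `c / 2` for
-- all `s ≥ 0`, and invertibility passes from `T + (s + c / 4)` to `T + s`.
theorem isUnit_of_bddBelow_of_accretive {𝕜 E : Type*} [RCLike 𝕜] [NormedAddCommGroup E]
    [NormedSpace 𝕜 E] [CompleteSpace E]
    (T : E →L[𝕜] E) {c : ℝ} (hc : 0 < c) (hT : ∀ v, c * ‖v‖ ≤ ‖T v‖)
    (hacc : ∀ s : ℝ, 0 ≤ s → ∀ v, s * ‖v‖ ≤ ‖T v + (s : 𝕜) • v‖) : IsUnit T := by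
  let R : ℝ → E →L[𝕜] E := fun s => T + algebraMap 𝕜 _ s
  have hR_apply (s : ℝ) (v : E) : R s v = T v + (s : 𝕜) • v := rfl
  have hbdd (s : ℝ) (hs : 0 ≤ s) (v : E) : c / 2 * ‖v‖ ≤ ‖R s v‖ := by
    rw [hR_apply]
    rcases le_total s (c / 2) with h | h
    · have := norm_sub_norm_le (T v) (-((s : 𝕜) • v))
      rw [sub_neg_eq_add, norm_neg, norm_smul, RCLike.norm_ofReal, abs_of_nonneg hs] at this
      nlinarith [hT v, norm_nonneg v]
    · exact (mul_le_mul_of_nonneg_right h (norm_nonneg v)).trans (hacc s hs v)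
  have hlarge (s : ℝ) (hs : ‖T‖ < s) : IsUnit (R s) := by
    have hs0 : 0 < s := (norm_nonneg T).trans_lt hs
    let u := ((isUnit_iff_ne_zero.2 (RCLike.ofReal_ne_zero.2 hs0.ne')).map
      (algebraMap 𝕜 (E →L[𝕜] E))).unit
    refine isUnit_of_norm_sub_lt hs0 u (fun v => ?_) ?_
    · simp [u, norm_smul, abs_of_pos hs0]
    · simpa [u, R] using hs
  have hstep (s : ℝ) (hs : 0 ≤ s) (h : IsUnit (R (s + c / 4))) : IsUnit (R s) := by
    obtain ⟨u, hu⟩ := h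
    refine isUnit_of_norm_sub_lt (half_pos hc) u (hu ▸ hbdd _ (by positivity)) ?_
    refine (opNorm_le_bound (M := c / 4) _ (by positivity) fun v => ?_).trans_lt (by linarith)
    rw [sub_apply, hu, hR_apply, hR_apply, add_sub_add_left_eq_sub, ← sub_smul, norm_smul]
    have : (s : 𝕜) - ((s + c / 4 : ℝ) : 𝕜) = ((-(c / 4) : ℝ) : 𝕜) := by push_cast; ring
    rw [this, RCLike.norm_ofReal, abs_neg, abs_of_pos (by positivity)]
  have hdesc (n : ℕ) : ∀ s, 0 ≤ s → ‖T‖ < s + n * (c / 4) → IsUnit (R s) := by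
    induction n with
    | zero => intro s _ h; exact hlarge s (by simpa using h)
    | succ n ih =>
      intro s hs h
      exact hstep s hs (ih _ (by positivity) (by push_cast at h; linarith))
  obtain ⟨n, hn⟩ := exists_nat_gt (‖T‖ / (c / 4))
  simpa [R] using hdesc n 0 le_rfl (by rw [div_lt_iff₀ (by positivity)] at hn; linarith)

end ContinuousLinearMap

namespace PreHilbertModule

variable {A : Type*} [CStarAlgebra A] [PartialOrder A] [StarOrderedRing A]
variable {X Y : Type*} [NormedAddCommGroup X] [Module A X] [PreHilbertModule A X]
  [NormedAddCommGroup Y] [Module A Y] [PreHilbertModule A Y]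

-- `X` with the arguments of the inner product swapped, and `ℂ` acting through `A`: a
-- `CStarModule` in Mathlib's convention (`A`-linear in the second argument).
def Flip (_A X : Type*) : Type _ := X

instance : NormedAddCommGroup (Flip A X) := ‹NormedAddCommGroup X›
instance : Module A (Flip A X) := ‹Module A X›
instance : Module ℂ (Flip A X) := Module.compHom X (algebraMap ℂ A)

instance : CStarModule A (Flip A X) where
  inner x y := @inner A X _ y x
  inner_add_right {x y z} := inner_add_left (A := A) (U := X) y z x
  inner_self_nonneg {x} := inner_self_nonneg (A := A) (U := X) x
  inner_self {x} := inner_self_eq_zero (A := A) (U := X) x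
  inner_op_smul_right {a x y} := inner_smul_left (A := A) (U := X) a y x
  inner_smul_right_complex {z x y} :=
    (inner_smul_left (U := X) (algebraMap ℂ A z) y x).trans (Algebra.smul_def z _).symm
  star_inner x y := star_inner (A := A) (U := X) y x
  norm_eq_sqrt_norm_inner_self x := norm_eq (A := A) (U := X) x

theorem norm_inner_le (x y : X) : ‖inner A x y‖ ≤ ‖x‖ * ‖y‖ :=
  (CStarModule.norm_inner_le (A := A) (Flip A X) (x := y) (y := x)).trans_eq (mul_comm _ _)

theorem norm_inner_self (x : X) : ‖inner A x x‖ = ‖x‖ ^ 2 :=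
  (CStarModule.norm_sq_eq A (E := Flip A X) (x := x)).symm

theorem norm_algebraMap_smul (z : ℂ) (x : X) : ‖algebraMap ℂ A z • x‖ = ‖z‖ * ‖x‖ :=
  (CStarModule.normedSpaceCore A (E := Flip A X)).norm_smul z x

variable (A X) in
abbrev normedSpace [Module ℂ X] [IsScalarTower ℂ A X] : NormedSpace ℂ X where
  norm_smul_le z x := by
    rw [← algebraMap_smul A z x, norm_algebraMap_smul]

theorem inner_add_right (x y z : X) : inner A x (y + z) = inner A x y + inner A x z := by
  rw [← star_inner, inner_add_left, star_add, star_inner, star_inner]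

theorem inner_zero_left (x : X) : inner A (0 : X) x = 0 := by
  simpa using inner_smul_left (0 : A) (0 : X) x

theorem exists_preimage_norm_le_of_isClosed_range [CompleteSpace X] [CompleteSpace Y]
    (f : X →L[A] Y) (hf : IsClosed (Set.range f)) :
    ∃ C > 0, ∀ y ∈ Set.range f, ∃ x, f x = y ∧ ‖x‖ ≤ C * ‖y‖ := by
  let := Module.compHom X (algebraMap ℂ A)
  let := Module.compHom Y (algebraMap ℂ A)
  have : IsScalarTower ℂ A X := .of_algebraMap_smul fun _ _ => rfl
  have : IsScalarTower ℂ A Y := .of_algebraMap_smul fun _ _ => rfl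
  let := normedSpace A X
  let := normedSpace A Y
  exact (f.restrictScalars ℂ).exists_preimage_norm_le_of_isClosed_range hf

theorem exists_norm_le_norm_adjoint_add_norm_sub [CompleteSpace X] [CompleteSpace Y]
    (f : X →L[A] Y) (g : Y → X) (hfg : ∀ x y, inner A (f x) y = inner A x (g y))
    (hf : IsClosed (Set.range f)) :
    ∃ C > 0, ∀ y ∈ Set.range f, ∀ z, ‖y‖ ≤ C * ‖g z‖ + ‖z - y‖ := by
  obtain ⟨C, hC, hpre⟩ := exists_preimage_norm_le_of_isClosed_range f hf
  refine ⟨C, hC, fun y hy z => ?_⟩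
  obtain ⟨x, rfl, hx⟩ := hpre y hy
  have hsplit : inner A (f x) (f x) = inner A x (g z) - inner A (f x) (z - f x) := by
    rw [← hfg, eq_sub_iff_add_eq, ← inner_add_right, add_sub_cancel]
  have hsq : ‖f x‖ ^ 2 ≤ ‖f x‖ * (C * ‖g z‖ + ‖z - f x‖) := by
    calc ‖f x‖ ^ 2 = ‖inner A (f x) (f x)‖ := (norm_inner_self _).symm
      _ ≤ ‖x‖ * ‖g z‖ + ‖f x‖ * ‖z - f x‖ := by
        rw [hsplit]
        exact (norm_sub_le _ _).trans (add_le_add (norm_inner_le _ _) (norm_inner_le _ _))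
      _ ≤ C * ‖f x‖ * ‖g z‖ + ‖f x‖ * ‖z - f x‖ := by gcongr
      _ = ‖f x‖ * (C * ‖g z‖ + ‖z - f x‖) := by ring
  rcases (norm_nonneg (f x)).eq_or_lt with h | h
  · rw [← h]; positivity
  · nlinarith

theorem mul_norm_le_norm_add_smul_of_inner_nonneg [Module ℂ X] [IsScalarTower ℂ A X]
    {w v : X} (hwv : 0 ≤ inner A w v) {s : ℝ} (hs : 0 ≤ s) : s * ‖v‖ ≤ ‖w + (s : ℂ) • v‖ := by
  have hsmul : inner A ((s : ℂ) • v) v = s • inner A v v := by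
    rw [← algebraMap_smul A, inner_smul_left, ← Algebra.smul_def, Complex.coe_smul]
  have hle : s • inner A v v ≤ inner A (w + (s : ℂ) • v) v := by
    rw [inner_add_left, hsmul]
    exact le_add_of_nonneg_left hwv
  have hsq : s * ‖v‖ ^ 2 ≤ ‖w + (s : ℂ) • v‖ * ‖v‖ :=
    calc s * ‖v‖ ^ 2 = ‖s • inner A v v‖ := by
          rw [norm_smul, norm_inner_self, Real.norm_of_nonneg hs]
      _ ≤ ‖inner A (w + (s : ℂ) • v) v‖ :=
          CStarAlgebra.norm_le_norm_of_nonneg_of_le (smul_nonneg hs (inner_self_nonneg v)) hle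
      _ ≤ ‖w + (s : ℂ) • v‖ * ‖v‖ := norm_inner_le _ _
  rcases (norm_nonneg v).eq_or_lt with h | h
  · rw [← h, mul_zero]; positivity
  · nlinarith

section Laplacian

variable {U V W : Type*} [NormedAddCommGroup U] [Module A U] [PreHilbertModule A U]
  [NormedAddCommGroup V] [Module A V] [PreHilbertModule A V]
  [NormedAddCommGroup W] [Module A W] [PreHilbertModule A W]

theorem adjoint_comp_adjoint_eq_zero {f : U → V} {f' : V → U} {g : V → W} {g' : W → V}
    (hf : ∀ x y, inner A (f x) y = inner A x (f' y))
    (hg : ∀ y z, inner A (g y) z = inner A y (g' z))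
    (hgf : ∀ x, g (f x) = 0) (z : W) : f' (g' z) = 0 := by
  rw [← inner_self_eq_zero (A := A), ← hf, ← hg, hgf, inner_zero_left]

variable (σ : U →L[A] V) (σs : V →L[A] U) (σ' : V →L[A] W) (σ's : W →L[A] V)

def laplacian : V →L[A] V := σ.comp σs + σ's.comp σ'

variable {σ σs σ' σ's}

theorem inner_laplacian_apply_self (hσ : ∀ u v, inner A (σ u) v = inner A u (σs v))
    (hσ' : ∀ v w, inner A (σ' v) w = inner A v (σ's w)) (v : V) :
    inner A (laplacian σ σs σ' σ's v) v = inner A (σs v) (σs v) + inner A (σ' v) (σ' v) := by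
  rw [laplacian, add_apply, ContinuousLinearMap.comp_apply,
    ContinuousLinearMap.comp_apply, inner_add_left, hσ, ← star_inner v, ← hσ', star_inner]

theorem inner_laplacian_apply_self_nonneg (hσ : ∀ u v, inner A (σ u) v = inner A u (σs v))
    (hσ' : ∀ v w, inner A (σ' v) w = inner A v (σ's w)) (v : V) :
    0 ≤ inner A (laplacian σ σs σ' σ's v) v := by
  rw [inner_laplacian_apply_self hσ hσ']
  exact add_nonneg (inner_self_nonneg _) (inner_self_nonneg _)

theorem norm_sq_le_norm_laplacian_mul_norm (hσ : ∀ u v, inner A (σ u) v = inner A u (σs v))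
    (hσ' : ∀ v w, inner A (σ' v) w = inner A v (σ's w)) (v : V) :
    ‖σs v‖ ^ 2 ≤ ‖laplacian σ σs σ' σ's v‖ * ‖v‖ ∧
      ‖σ' v‖ ^ 2 ≤ ‖laplacian σ σs σ' σ's v‖ * ‖v‖ := by
  have hΔ := (inner_laplacian_apply_self hσ hσ' v).symm ▸ norm_inner_le (A := A) _ v
  rw [← norm_inner_self (A := A), ← norm_inner_self (A := A)]
  exact ⟨(CStarAlgebra.norm_le_norm_of_nonneg_of_le (inner_self_nonneg _)
      (le_add_of_nonneg_right (inner_self_nonneg _))).trans hΔ,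
    (CStarAlgebra.norm_le_norm_of_nonneg_of_le (inner_self_nonneg _)
      (le_add_of_nonneg_left (inner_self_nonneg _))).trans hΔ⟩

theorem exists_mul_norm_le_norm_laplacian [CompleteSpace U] [CompleteSpace V] [CompleteSpace W]
    (hσ : ∀ u v, inner A (σ u) v = inner A u (σs v))
    (hσ' : ∀ v w, inner A (σ' v) w = inner A v (σ's w))
    (hexact : LinearMap.range (σ : U →ₗ[A] V) = LinearMap.ker (σ' : V →ₗ[A] W))
    (hclosed : IsClosed (Set.range σ')) :
    ∃ c > 0, ∀ v, c * ‖v‖ ≤ ‖laplacian σ σs σ' σ's v‖ := by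
  have hrange : Set.range σ = σ' ⁻¹' {0} := by
    ext v
    simpa using SetLike.ext_iff.1 hexact v
  obtain ⟨C₁, hC₁, hpre⟩ := exists_preimage_norm_le_of_isClosed_range σ' hclosed
  obtain ⟨C₂, hC₂, hσs⟩ := exists_norm_le_norm_adjoint_add_norm_sub σ σs hσ
    (hrange ▸ isClosed_singleton.preimage σ'.continuous)
  have hlin (v : V) : ‖v‖ ≤ (C₂ + 2 * C₁) * (‖σs v‖ + ‖σ' v‖) := by
    obtain ⟨x, hx, hxle⟩ := hpre (σ' v) ⟨v, rfl⟩
    have hvx := hσs (v - x) (by simp [hrange, hx]) v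
    rw [sub_sub_cancel] at hvx
    calc ‖v‖ ≤ ‖v - x‖ + ‖x‖ := norm_le_norm_sub_add v x
      _ ≤ C₂ * ‖σs v‖ + 2 * (C₁ * ‖σ' v‖) := by linarith
      _ ≤ (C₂ + 2 * C₁) * (‖σs v‖ + ‖σ' v‖) := by nlinarith [norm_nonneg (σs v), norm_nonneg (σ' v)]
  set K := C₂ + 2 * C₁
  refine ⟨(4 * K ^ 2)⁻¹, by positivity, fun v => ?_⟩
  obtain ⟨hs, ht⟩ := norm_sq_le_norm_laplacian_mul_norm hσ hσ' v
  rw [inv_mul_le_iff₀ (by positivity)]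
  rcases (norm_nonneg v).eq_or_lt with h | h
  · rw [← h]; positivity
  have hsq : ‖v‖ * ‖v‖ ≤ 4 * K ^ 2 * ‖laplacian σ σs σ' σ's v‖ * ‖v‖ :=
    calc ‖v‖ * ‖v‖ ≤ (K * (‖σs v‖ + ‖σ' v‖)) ^ 2 := by nlinarith [hlin v]
      _ ≤ 2 * K ^ 2 * (‖σs v‖ ^ 2 + ‖σ' v‖ ^ 2) := by nlinarith [sq_nonneg (‖σs v‖ - ‖σ' v‖)]
      _ ≤ 4 * K ^ 2 * ‖laplacian σ σs σ' σ's v‖ * ‖v‖ := by nlinarith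
  exact le_of_mul_le_mul_right hsq h

end Laplacian

end PreHilbertModule

open PreHilbertModule in
/-- Remark 5: under the hypotheses of Lemma 9, for all nonzero complex
scalars `λ, μ`, the map `λ σ ∘ σ* + μ σ'* ∘ σ'` is a bijective (continuous `A`-linear)
automorphism of `V`. Here the complex scalar action on `V` is the one induced from the
`A`-action (`V` is a `ℂ`-module compatibly with the `A`-module structure). -/
theorem scaled_laplacian_of_exact_sequence_bijective
    {A : Type*} [CStarAlgebra A] [PartialOrder A] [StarOrderedRing A]
    {U V W : Type*}
    [NormedAddCommGroup U] [Module A U] [PreHilbertModule A U] [CompleteSpace U]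
    [NormedAddCommGroup V] [Module A V] [PreHilbertModule A V] [CompleteSpace V]
    [Module ℂ V] [IsScalarTower ℂ A V]
    [NormedAddCommGroup W] [Module A W] [PreHilbertModule A W] [CompleteSpace W]
    (σ : U →L[A] V) (σs : V →L[A] U) (σ' : V →L[A] W) (σ's : W →L[A] V)
    (hσ : ∀ (u : U) (v : V), inner A (σ u) v = inner A u (σs v))
    (hσ' : ∀ (v : V) (w : W), inner A (σ' v) w = inner A v (σ's w))
    (hexact : LinearMap.range (σ : U →ₗ[A] V) = LinearMap.ker (σ' : V →ₗ[A] W))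
    (hclosed : IsClosed (LinearMap.range (σ' : V →ₗ[A] W) : Set W)) :
    ∀ (lam mu : ℂ), lam ≠ 0 → mu ≠ 0 →
      Function.Bijective (fun v : V => lam • σ (σs v) + mu • σ's (σ' v)) := by
  intro lam mu hlam hmu
  let := normedSpace A V
  have hσ'σ (u : U) : σ' (σ u) = 0 := LinearMap.mem_ker.1 (hexact ▸ LinearMap.mem_range_self _ u)
  have hσsσ's := adjoint_comp_adjoint_eq_zero hσ hσ' hσ'σ
  obtain ⟨c, hc, hΔ⟩ := exists_mul_norm_le_norm_laplacian hσ hσ' hexact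
    (by rwa [LinearMap.coe_range] at hclosed)
  have hΔunit : IsUnit ((laplacian σ σs σ' σ's).restrictScalars ℂ) :=
    ContinuousLinearMap.isUnit_of_bddBelow_of_accretive _ hc hΔ fun s hs v =>
      mul_norm_le_norm_add_smul_of_inner_nonneg (inner_laplacian_apply_self_nonneg hσ hσ' v) hs
  refine ContinuousLinearMap.isUnit_iff_bijective.1
    (isUnit_smul_add_smul_of_mul_eq_zero (a := (σ.comp σs).restrictScalars ℂ)
      (b := (σ's.comp σ').restrictScalars ℂ) ?_ ?_ hΔunit hlam hmu)
  · ext v; simp [hσsσ's]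
  · ext v; simp [hσ'σ]
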